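/- arXiv:2510.06403 — 5 statements merged into one kernel-verified Lean document; each statement's English description precedes it below -/
import Mathlib

section
/- Let α > 0 and let f : ℝⁿ → ℝ, g : ℝⁿ → ℝᵐ, h : ℝⁿ → ℝˡ be differentiable, and fix θ ∈ ℝⁿ. If (ξ*, u, v) satisfies the QP-KKT conditions at θ, then the Lie derivative of f along ξ* satisfies the identity ⟪∇f(θ), ξ*⟫ = −‖ξ*‖² + α Σᵢ uᵢ gᵢ(θ) + α Σⱼ vⱼ hⱼ(θ). (Part ii of the Proposition 'Time derivatives and Invariance'.) -/
open scoped RealInnerProductSpace BigOperators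

/-- The KKT conditions of the safe-gradient-flow quadratic program at `θ`,
with primal point `ξ` and multipliers `(u, v)`. -/
def QPKKT {n m l : ℕ} (α : ℝ)
    (f : EuclideanSpace ℝ (Fin n) → ℝ)
    (g : Fin m → EuclideanSpace ℝ (Fin n) → ℝ)
    (h : Fin l → EuclideanSpace ℝ (Fin n) → ℝ)
    (θ ξ : EuclideanSpace ℝ (Fin n)) (u : Fin m → ℝ) (v : Fin l → ℝ) : Prop :=
  ξ + gradient f θ + ∑ i, u i • gradient (g i) θ + ∑ j, v j • gradient (h j) θ = 0 ∧
  (∀ i, ⟪gradient (g i) θ, ξ⟫ + α * g i θ ≤ 0) ∧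
  (∀ j, ⟪gradient (h j) θ, ξ⟫ + α * h j θ = 0) ∧
  (∀ i, 0 ≤ u i) ∧
  ∑ i, u i * (⟪gradient (g i) θ, ξ⟫ + α * g i θ) = 0

/-! Pairing the stationarity condition with `ξ*` turns `⟪∇f(θ), ξ*⟫` into `-‖ξ*‖²` minus the
multiplier-weighted sums `Σ uᵢ ⟪∇gᵢ(θ), ξ*⟫` and `Σ vⱼ ⟪∇hⱼ(θ), ξ*⟫`. Complementary slackness
rewrites the first as `-α Σ uᵢ gᵢ(θ)`, and the equality constraints rewrite each term of the
second as `-α vⱼ hⱼ(θ)`. -/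

section InnerProductSpace

variable {E : Type*} [NormedAddCommGroup E] [InnerProductSpace ℝ E]

theorem inner_eq_neg_norm_sq_sub_of_add_add_add_eq_zero {ξ a b c : E} (h : ξ + a + b + c = 0) :
    ⟪a, ξ⟫ = -‖ξ‖ ^ 2 - ⟪b, ξ⟫ - ⟪c, ξ⟫ := by
  have hpair := congrArg (⟪·, ξ⟫) h
  simp only [inner_add_left, inner_zero_left, real_inner_self_eq_norm_sq] at hpair
  linarith

theorem real_inner_sum_smul_left {ι : Type*} (s : Finset ι) (u : ι → ℝ) (b : ι → E) (x : E) :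
    ⟪∑ i ∈ s, u i • b i, x⟫ = ∑ i ∈ s, u i * ⟪b i, x⟫ := by
  simp only [sum_inner, real_inner_smul_left]

end InnerProductSpace

theorem Finset.sum_mul_eq_neg_mul_sum_of_sum_mul_add_mul_eq_zero {ι R : Type*} [CommRing R]
    {s : Finset ι} {u x y : ι → R} {α : R} (h : ∑ i ∈ s, u i * (x i + α * y i) = 0) :
    ∑ i ∈ s, u i * x i = -(α * ∑ i ∈ s, u i * y i) := by
  simp only [mul_add, Finset.sum_add_distrib, Finset.mul_sum, mul_left_comm α] at h ⊢
  linear_combination h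

theorem Finset.sum_mul_eq_neg_mul_sum_of_add_mul_eq_zero {ι R : Type*} [CommRing R]
    {s : Finset ι} {v x y : ι → R} {α : R} (h : ∀ i ∈ s, x i + α * y i = 0) :
    ∑ i ∈ s, v i * x i = -(α * ∑ i ∈ s, v i * y i) :=
  Finset.sum_mul_eq_neg_mul_sum_of_sum_mul_add_mul_eq_zero <|
    Finset.sum_eq_zero fun i hi => by rw [h i hi, mul_zero]

theorem lie_derivative_identity_general {n m l : ℕ} (α : ℝ)
    (f : EuclideanSpace ℝ (Fin n) → ℝ)
    (g : Fin m → EuclideanSpace ℝ (Fin n) → ℝ)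
    (h : Fin l → EuclideanSpace ℝ (Fin n) → ℝ)
    (θ ξstar : EuclideanSpace ℝ (Fin n)) (u : Fin m → ℝ) (v : Fin l → ℝ)
    (hkkt : QPKKT α f g h θ ξstar u v) :
    ⟪gradient f θ, ξstar⟫ =
      -‖ξstar‖ ^ 2 + α * ∑ i, u i * g i θ + α * ∑ j, v j * h j θ := by
  obtain ⟨hstationary, -, hequality, -, hslackness⟩ := hkkt
  rw [inner_eq_neg_norm_sq_sub_of_add_add_add_eq_zero hstationary,
    real_inner_sum_smul_left, real_inner_sum_smul_left,
    Finset.sum_mul_eq_neg_mul_sum_of_sum_mul_add_mul_eq_zero hslackness,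
    Finset.sum_mul_eq_neg_mul_sum_of_add_mul_eq_zero fun j _ => hequality j]
  ring

/-- Part ii of "Time derivatives and Invariance": at a QP-KKT point,
`⟪∇f(θ), ξ*⟫ = -‖ξ*‖² + α Σᵢ uᵢ gᵢ(θ) + α Σⱼ vⱼ hⱼ(θ)`. -/
theorem lie_derivative_identity {n m l : ℕ} (α : ℝ) (hα : 0 < α)
    (f : EuclideanSpace ℝ (Fin n) → ℝ)
    (g : Fin m → EuclideanSpace ℝ (Fin n) → ℝ)
    (h : Fin l → EuclideanSpace ℝ (Fin n) → ℝ)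
    (hf : Differentiable ℝ f) (hg : ∀ i, Differentiable ℝ (g i))
    (hh : ∀ j, Differentiable ℝ (h j))
    (θ ξstar : EuclideanSpace ℝ (Fin n)) (u : Fin m → ℝ) (v : Fin l → ℝ)
    (hkkt : QPKKT α f g h θ ξstar u v) :
    ⟪gradient f θ, ξstar⟫ =
      -‖ξstar‖ ^ 2 + α * ∑ i, u i * g i θ + α * ∑ j, v j * h j θ :=
  lie_derivative_identity_general α f g h θ ξstar u v hkkt
end

section
/- Let α > 0 and let f : ℝⁿ → ℝ, g : ℝⁿ → ℝᵐ, h : ℝⁿ → ℝˡ be differentiable, and fix θ ∈ ℝⁿ with gᵢ(θ) ≤ 0 for all i and hⱼ(θ) = 0 for all j (θ is feasible). If (ξ*, u, v) satisfies the QP-KKT conditions at θ, then ⟪∇f(θ), ξ*⟫ ≤ −‖ξ*‖² ≤ 0; moreover, if ⟪∇f(θ), ξ*⟫ = 0 then ξ* = 0 and (θ, u, v) satisfies the NLP-KKT conditions. (Part iii of the Proposition 'Time derivatives and Invariance'.) -/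
open scoped RealInnerProductSpace BigOperators

/-- The KKT conditions of the nonlinear program at `θ` with multipliers `(u, v)`. -/
def NLPKKT {n m l : ℕ}
    (f : EuclideanSpace ℝ (Fin n) → ℝ)
    (g : Fin m → EuclideanSpace ℝ (Fin n) → ℝ)
    (h : Fin l → EuclideanSpace ℝ (Fin n) → ℝ)
    (θ : EuclideanSpace ℝ (Fin n)) (u : Fin m → ℝ) (v : Fin l → ℝ) : Prop :=
  gradient f θ + ∑ i, u i • gradient (g i) θ + ∑ j, v j • gradient (h j) θ = 0 ∧
  (∀ i, g i θ ≤ 0) ∧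
  (∀ j, h j θ = 0) ∧
  (∀ i, 0 ≤ u i) ∧
  ∑ i, u i * g i θ = 0

/-
Pairing the stationarity condition of the quadratic program with `ξ*` gives
`⟪∇f(θ), ξ*⟫ = -‖ξ*‖² + α ∑ᵢ uᵢ gᵢ(θ)`: the equality constraints contribute nothing at a feasible
point, and complementary slackness turns the inequality terms into `-α ∑ᵢ uᵢ gᵢ(θ)`. At a feasible
point both summands are nonpositive, so `⟪∇f(θ), ξ*⟫ = 0` forces `ξ* = 0`, and at `ξ* = 0` the QP-KKT
conditions are the NLP-KKT conditions scaled by `α > 0`.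
-/

section InnerProductSpace

variable {E ι κ : Type*} [NormedAddCommGroup E] [InnerProductSpace ℝ E] [Fintype ι] [Fintype κ]

theorem inner_eq_neg_norm_sq_add_of_stationary {α : ℝ} {ξ p : E} {a : ι → E} {b : κ → E}
    {c u : ι → ℝ} {v : κ → ℝ}
    (hstat : ξ + p + ∑ i, u i • a i + ∑ j, v j • b j = 0) (hb : ∀ j, ⟪b j, ξ⟫ = 0)
    (hcompl : ∑ i, u i * (⟪a i, ξ⟫ + α * c i) = 0) :
    ⟪p, ξ⟫ = -‖ξ‖ ^ 2 + α * ∑ i, u i * c i := by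
  have hpair := congrArg (⟪·, ξ⟫) hstat
  simp only [inner_add_left, sum_inner, real_inner_smul_left, hb, mul_zero,
    Finset.sum_const_zero, real_inner_self_eq_norm_sq, inner_zero_left] at hpair
  simp only [mul_add, Finset.sum_add_distrib, mul_left_comm (u _) α, ← Finset.mul_sum] at hcompl
  linarith

end InnerProductSpace

section KKT

variable {n m l : ℕ} {α : ℝ} {f : EuclideanSpace ℝ (Fin n) → ℝ}
  {g : Fin m → EuclideanSpace ℝ (Fin n) → ℝ} {h : Fin l → EuclideanSpace ℝ (Fin n) → ℝ}
  {θ ξ : EuclideanSpace ℝ (Fin n)} {u : Fin m → ℝ} {v : Fin l → ℝ}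

theorem QPKKT.inner_gradient_eq (hfeas_h : ∀ j, h j θ = 0) (hkkt : QPKKT α f g h θ ξ u v) :
    ⟪gradient f θ, ξ⟫ = -‖ξ‖ ^ 2 + α * ∑ i, u i * g i θ :=
  inner_eq_neg_norm_sq_add_of_stationary hkkt.1 (fun j => by simpa [hfeas_h j] using hkkt.2.2.1 j)
    hkkt.2.2.2.2

theorem QPKKT.nlpkkt_of_zero (hα : 0 < α) (hkkt : QPKKT α f g h θ 0 u v) :
    NLPKKT f g h θ u v := by
  obtain ⟨hstat, hineq, heq, hu, hcompl⟩ := hkkt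
  simp only [inner_zero_right, zero_add] at hstat hineq heq hcompl
  refine ⟨hstat, fun i => nonpos_of_mul_nonpos_right (hineq i) hα,
    fun j => (mul_eq_zero.mp (heq j)).resolve_left hα.ne', hu, ?_⟩
  simp only [mul_left_comm (u _) α, ← Finset.mul_sum] at hcompl
  exact (mul_eq_zero.mp hcompl).resolve_left hα.ne'

end KKT

theorem lie_derivative_nonpos_on_feasible_general {n m l : ℕ} (α : ℝ) (hα : 0 < α)
    (f : EuclideanSpace ℝ (Fin n) → ℝ)
    (g : Fin m → EuclideanSpace ℝ (Fin n) → ℝ)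
    (h : Fin l → EuclideanSpace ℝ (Fin n) → ℝ)
    (θ ξstar : EuclideanSpace ℝ (Fin n)) (u : Fin m → ℝ) (v : Fin l → ℝ)
    (hfeas_g : ∀ i, g i θ ≤ 0) (hfeas_h : ∀ j, h j θ = 0)
    (hkkt : QPKKT α f g h θ ξstar u v) :
    (⟪gradient f θ, ξstar⟫ ≤ -‖ξstar‖ ^ 2 ∧ -‖ξstar‖ ^ 2 ≤ 0) ∧
    (⟪gradient f θ, ξstar⟫ = 0 → ξstar = 0 ∧ NLPKKT f g h θ u v) := by
  have hlie := hkkt.inner_gradient_eq hfeas_h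
  have hslack : α * ∑ i, u i * g i θ ≤ 0 :=
    mul_nonpos_of_nonneg_of_nonpos hα.le
      (Finset.sum_nonpos fun i _ => mul_nonpos_of_nonneg_of_nonpos (hkkt.2.2.2.1 i) (hfeas_g i))
  have hnorm := sq_nonneg ‖ξstar‖
  refine ⟨⟨by linarith, by linarith⟩, fun hzero => ?_⟩
  have hξ : ξstar = 0 := norm_eq_zero.mp (pow_eq_zero_iff two_ne_zero |>.mp (by linarith))
  subst hξ
  exact ⟨rfl, hkkt.nlpkkt_of_zero hα⟩

/-- Part iii of "Time derivatives and Invariance": at a feasible `θ`, a QP-KKT point satisfies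
`⟪∇f(θ), ξ*⟫ ≤ -‖ξ*‖² ≤ 0`, and if `⟪∇f(θ), ξ*⟫ = 0` then `ξ* = 0` and `(θ, u, v)` is an
NLP-KKT point. -/
theorem lie_derivative_nonpos_on_feasible {n m l : ℕ} (α : ℝ) (hα : 0 < α)
    (f : EuclideanSpace ℝ (Fin n) → ℝ)
    (g : Fin m → EuclideanSpace ℝ (Fin n) → ℝ)
    (h : Fin l → EuclideanSpace ℝ (Fin n) → ℝ)
    (hf : Differentiable ℝ f) (hg : ∀ i, Differentiable ℝ (g i))
    (hh : ∀ j, Differentiable ℝ (h j))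
    (θ ξstar : EuclideanSpace ℝ (Fin n)) (u : Fin m → ℝ) (v : Fin l → ℝ)
    (hfeas_g : ∀ i, g i θ ≤ 0) (hfeas_h : ∀ j, h j θ = 0)
    (hkkt : QPKKT α f g h θ ξstar u v) :
    (⟪gradient f θ, ξstar⟫ ≤ -‖ξstar‖ ^ 2 ∧ -‖ξstar‖ ^ 2 ≤ 0) ∧
    (⟪gradient f θ, ξstar⟫ = 0 → ξstar = 0 ∧ NLPKKT f g h θ u v) :=
  lie_derivative_nonpos_on_feasible_general α hα f g h θ ξstar u v hfeas_g hfeas_h hkkt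
end

section
/- Let α > 0, ε > 0, and let f : ℝⁿ → ℝ, g : ℝⁿ → ℝᵐ, h : ℝⁿ → ℝˡ be differentiable. Fix θ ∈ ℝⁿ and suppose (ξ*, u, v) satisfies the QP-KKT conditions at θ. Let q ∈ ℝᵐ satisfy qᵢ ≥ 0 for all i, qᵢ = 0 whenever gᵢ(θ) < 0, and qᵢ = 1 whenever gᵢ(θ) > 0; let r ∈ ℝˡ satisfy rⱼ = sign(hⱼ(θ)) whenever hⱼ(θ) ≠ 0. Then the element p := ⟪∇f(θ), ξ*⟫ + (1/ε) Σᵢ qᵢ ⟪∇gᵢ(θ), ξ*⟫ + (1/ε) Σⱼ rⱼ ⟪∇hⱼ(θ), ξ*⟫ of the set-valued Lie derivative of the penalty function V_ε satisfies p ≤ −‖ξ*‖² + α Σᵢ [gᵢ(θ)]₊ (uᵢ − 1/ε) + α Σⱼ |hⱼ(θ)| (|vⱼ| − 1/ε), where [x]₊ = max{x, 0}. (The key Lyapunov decrease bound, inequality (19) in the paper.) -/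
/-!
Pairing the stationarity condition of the KKT system with `ξ*` expresses `⟪∇f(θ), ξ*⟫` through
`-‖ξ*‖²` and the multiplier terms `uᵢ⟪∇gᵢ(θ), ξ*⟫`, `vⱼ⟪∇hⱼ(θ), ξ*⟫`. Each constraint then
contributes a term that is bounded separately: complementary slackness turns `uᵢ⟪∇gᵢ(θ), ξ*⟫`
into `-α uᵢ gᵢ(θ)`, and primal feasibility bounds `⟪∇gᵢ(θ), ξ*⟫ ≤ -α gᵢ(θ)` and gives
`⟪∇hⱼ(θ), ξ*⟫ = -α hⱼ(θ)`, so the choice of `qᵢ` and `rⱼ` produces the penalty terms.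
-/

open scoped RealInnerProductSpace BigOperators

theorem norm_sq_add_inner_eq_zero_of_add_sum_smul_eq_zero {E ι κ : Type*}
    [NormedAddCommGroup E] [InnerProductSpace ℝ E] [Fintype ι] [Fintype κ]
    (ξ a : E) (b : ι → E) (c : κ → E) (u : ι → ℝ) (v : κ → ℝ)
    (h : ξ + a + ∑ i, u i • b i + ∑ j, v j • c j = 0) :
    ‖ξ‖ ^ 2 + ⟪a, ξ⟫ + ∑ i, u i * ⟪b i, ξ⟫ + ∑ j, v j * ⟪c j, ξ⟫ = 0 := by
  have := congrArg (fun w => ⟪w, ξ⟫) h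
  simpa [inner_add_left, sum_inner, real_inner_smul_left, real_inner_self_eq_norm_sq] using this

theorem Real.sign_mul_self_eq_abs (x : ℝ) : Real.sign x * x = |x| := by
  rcases lt_trichotomy x 0 with hx | rfl | hx
  · rw [Real.sign_of_neg hx, abs_of_neg hx, neg_one_mul]
  · simp
  · rw [Real.sign_of_pos hx, abs_of_pos hx, one_mul]

/-- The contribution of one inequality constraint `γ = gᵢ(θ)` with slope `a = ⟪∇gᵢ(θ), ξ*⟫`,
where `c` stands for `1/ε`. -/
theorem ineq_penalty_term_le {α c u q a γ : ℝ} (hα : 0 ≤ α) (hc : 0 ≤ c) (hu : 0 ≤ u)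
    (hq : 0 ≤ q) (hq_neg : γ < 0 → q = 0) (hq_pos : 0 < γ → q = 1)
    (hfeas : a + α * γ ≤ 0) (hslack : u * (a + α * γ) = 0) :
    c * (q * a) - u * a ≤ α * (max γ 0 * (u - c)) := by
  have hua : u * a = -(α * (u * γ)) := by linarith
  rw [hua]
  rcases lt_trichotomy γ 0 with hγ | rfl | hγ
  · rw [hq_neg hγ, max_eq_right hγ.le]
    nlinarith [mul_nonneg hα (mul_nonneg hu (neg_nonneg.mpr hγ.le))]
  · have : c * (q * a) ≤ 0 :=
      mul_nonpos_of_nonneg_of_nonpos hc (mul_nonpos_of_nonneg_of_nonpos hq (by linarith))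
    simpa using this
  · rw [hq_pos hγ, max_eq_left hγ.le]
    nlinarith [mul_le_mul_of_nonneg_left hfeas hc]

/-- The contribution of one equality constraint `η = hⱼ(θ)` with slope `a = ⟪∇hⱼ(θ), ξ*⟫`,
where `c` stands for `1/ε`. -/
theorem eq_penalty_term_le {α c v r a η : ℝ} (hα : 0 ≤ α)
    (hr : η ≠ 0 → r = Real.sign η) (hfeas : a + α * η = 0) :
    c * (r * a) - v * a ≤ α * (|η| * (|v| - c)) := by
  rw [show a = -(α * η) by linarith]
  rcases eq_or_ne η 0 with rfl | hη
  · simp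
  have hrη : r * η = |η| := by rw [hr hη, Real.sign_mul_self_eq_abs]
  have hvη : α * (v * η) ≤ α * (|v| * |η|) :=
    mul_le_mul_of_nonneg_left ((le_abs_self _).trans (abs_mul v η).le) hα
  calc c * (r * -(α * η)) - v * -(α * η) = α * (v * η) - c * α * (r * η) := by ring
    _ ≤ α * (|v| * |η|) - c * α * |η| := by rw [hrη]; linarith
    _ = α * (|η| * (|v| - c)) := by ring

theorem lyapunov_decrease_bound_general {n m l : ℕ} (α ε : ℝ) (hα : 0 < α) (hε : 0 < ε)
    (f : EuclideanSpace ℝ (Fin n) → ℝ)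
    (g : Fin m → EuclideanSpace ℝ (Fin n) → ℝ)
    (h : Fin l → EuclideanSpace ℝ (Fin n) → ℝ)
    (θ ξstar : EuclideanSpace ℝ (Fin n)) (u : Fin m → ℝ) (v : Fin l → ℝ)
    (hkkt : QPKKT α f g h θ ξstar u v)
    (q : Fin m → ℝ) (hq_nonneg : ∀ i, 0 ≤ q i)
    (hq_neg : ∀ i, g i θ < 0 → q i = 0)
    (hq_pos : ∀ i, 0 < g i θ → q i = 1)
    (r : Fin l → ℝ) (hr : ∀ j, h j θ ≠ 0 → r j = Real.sign (h j θ)) :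
    ⟪gradient f θ, ξstar⟫
        + (1 / ε) * ∑ i, q i * ⟪gradient (g i) θ, ξstar⟫
        + (1 / ε) * ∑ j, r j * ⟪gradient (h j) θ, ξstar⟫
      ≤ -‖ξstar‖ ^ 2 + α * ∑ i, max (g i θ) 0 * (u i - 1 / ε)
        + α * ∑ j, |h j θ| * (|v j| - 1 / ε) := by
  obtain ⟨hstat, hgfeas, hhfeas, hu, hslack⟩ := hkkt
  have hpair := norm_sq_add_inner_eq_zero_of_add_sum_smul_eq_zero _ _ _ _ _ _ hstat
  have hc : 0 ≤ 1 / ε := by positivity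
  have hslack_i : ∀ i, u i * (⟪gradient (g i) θ, ξstar⟫ + α * g i θ) = 0 :=
    fun i => (Finset.sum_eq_zero_iff_of_nonpos fun k _ =>
      mul_nonpos_of_nonneg_of_nonpos (hu k) (hgfeas k)).mp hslack i (Finset.mem_univ i)
  have hg_terms := Finset.sum_le_sum fun i (_ : i ∈ Finset.univ) =>
    ineq_penalty_term_le hα.le hc (hu i) (hq_nonneg i) (hq_neg i) (hq_pos i) (hgfeas i)
      (hslack_i i)
  have hh_terms := Finset.sum_le_sum fun j (_ : j ∈ Finset.univ) =>
    eq_penalty_term_le (v := v j) (c := 1 / ε) hα.le (hr j) (hhfeas j)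
  simp only [Finset.sum_sub_distrib, ← Finset.mul_sum] at hg_terms hh_terms
  linarith

/-- The key Lyapunov decrease bound (inequality (19)): any element `p` of the set-valued Lie
derivative of the penalty function `V_ε` along a QP-KKT point `ξ*` satisfies
`p ≤ -‖ξ*‖² + α Σᵢ [gᵢ(θ)]₊ (uᵢ - 1/ε) + α Σⱼ |hⱼ(θ)| (|vⱼ| - 1/ε)`. -/
theorem lyapunov_decrease_bound {n m l : ℕ} (α ε : ℝ) (hα : 0 < α) (hε : 0 < ε)
    (f : EuclideanSpace ℝ (Fin n) → ℝ)
    (g : Fin m → EuclideanSpace ℝ (Fin n) → ℝ)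
    (h : Fin l → EuclideanSpace ℝ (Fin n) → ℝ)
    (hf : Differentiable ℝ f) (hg : ∀ i, Differentiable ℝ (g i))
    (hh : ∀ j, Differentiable ℝ (h j))
    (θ ξstar : EuclideanSpace ℝ (Fin n)) (u : Fin m → ℝ) (v : Fin l → ℝ)
    (hkkt : QPKKT α f g h θ ξstar u v)
    (q : Fin m → ℝ) (hq_nonneg : ∀ i, 0 ≤ q i)
    (hq_neg : ∀ i, g i θ < 0 → q i = 0)
    (hq_pos : ∀ i, 0 < g i θ → q i = 1)
    (r : Fin l → ℝ) (hr : ∀ j, h j θ ≠ 0 → r j = Real.sign (h j θ)) :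
    ⟪gradient f θ, ξstar⟫
        + (1 / ε) * ∑ i, q i * ⟪gradient (g i) θ, ξstar⟫
        + (1 / ε) * ∑ j, r j * ⟪gradient (h j) θ, ξstar⟫
      ≤ -‖ξstar‖ ^ 2 + α * ∑ i, max (g i θ) 0 * (u i - 1 / ε)
        + α * ∑ j, |h j θ| * (|v j| - 1 / ε) :=
  lyapunov_decrease_bound_general α ε hα hε f g h θ ξstar u v hkkt q hq_nonneg hq_neg hq_pos r hr
end

section
/- Let a₁, …, a_m ∈ ℝⁿ, let c₁, …, c_l ∈ ℝⁿ be linearly independent, let A ⊆ {1, …, m}, and let z ∈ ℝⁿ. Suppose there exists w ∈ ℝⁿ with ⟪cⱼ, w⟫ = 0 for all j and ⟪aᵢ, w⟫ < 0 for all i ∈ A. Then the set of multipliers Λ = {(u, v) ∈ ℝᵐ × ℝˡ : uᵢ ≥ 0 for all i, uᵢ = 0 for all i ∉ A, and Σᵢ uᵢ aᵢ + Σⱼ vⱼ cⱼ = z} is bounded: there exists M < ∞ such that every (u, v) ∈ Λ satisfies uᵢ ≤ M and |vⱼ| ≤ M for all i, j. (Core of part i of the Proposition 'MFCQ implies bounded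 multipliers': under MFCQ the Lagrange multiplier set of the quadratic program is bounded, with aᵢ = ∇gᵢ(θ), cⱼ = ∇hⱼ(θ), A the active set, and z = −ξ* − ∇f(θ).) -/
/-!
Pairing the multiplier equation with the MFCQ direction `w` kills the equality part and leaves
`∑ᵢ uᵢ (-⟪aᵢ, w⟫) = -⟪z, w⟫`, a sum of nonnegative terms over the active set, each of which is
therefore at most `-⟪z, w⟫`; this bounds `u`. Once `u` is bounded, so is `∑ⱼ vⱼ cⱼ = z - ∑ᵢ uᵢ aᵢ`,
and since `v ↦ ∑ⱼ vⱼ cⱼ` is an injective linear map on a finite-dimensional space, it is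
antilipschitz, which bounds `v`.
-/

open scoped RealInnerProductSpace

theorem exists_forall_le_of_sum_mul_eq {ι : Type*} [Fintype ι] {s : ι → ℝ} {A : Set ι}
    (hs : ∀ i ∈ A, 0 < s i) (t : ℝ) :
    ∃ M : ℝ, ∀ u : ι → ℝ, (∀ i, 0 ≤ u i) → (∀ i ∉ A, u i = 0) → ∑ i, u i * s i = t →
      ∀ i, u i ≤ M := by
  obtain ⟨M, hM⟩ := Finite.exists_le fun i ↦ t / s i
  refine ⟨max 0 M, fun u hu huA hsum i ↦ ?_⟩
  by_cases hi : i ∈ A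
  · have hterm_nonneg (j : ι) : 0 ≤ u j * s j := by
      by_cases hj : j ∈ A
      · exact mul_nonneg (hu j) (hs j hj).le
      · simp [huA j hj]
    have hui : u i ≤ t / s i := by
      rw [le_div_iff₀ (hs i hi), ← hsum]
      exact Finset.single_le_sum (fun j _ ↦ hterm_nonneg j) (Finset.mem_univ i)
    exact le_max_of_le_right (hui.trans (hM i))
  · simp [huA i hi]

theorem LinearIndependent.exists_norm_le_mul_norm_sum_smul {κ E : Type*} [Fintype κ]
    [NormedAddCommGroup E] [NormedSpace ℝ E] {c : κ → E} (hc : LinearIndependent ℝ c) :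
    ∃ K : ℝ, 0 ≤ K ∧ ∀ v : κ → ℝ, ‖v‖ ≤ K * ‖∑ j, v j • c j‖ := by
  obtain ⟨K, -, hK⟩ := (Fintype.linearCombination ℝ c).exists_antilipschitzWith
    (LinearMap.ker_eq_bot.2 hc.fintypeLinearCombination_injective)
  refine ⟨K, K.2, fun v ↦ ?_⟩
  simpa [dist_eq_norm, Fintype.linearCombination_apply] using hK.le_mul_dist v 0

theorem sum_mul_inner_eq_of_sum_smul_add_sum_smul_eq {ι κ E : Type*} [Fintype ι] [Fintype κ]
    [NormedAddCommGroup E] [InnerProductSpace ℝ E] {a : ι → E} {c : κ → E} {u : ι → ℝ}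
    {v : κ → ℝ} {w z : E} (hw : ∀ j, ⟪c j, w⟫ = 0)
    (hsum : ∑ i, u i • a i + ∑ j, v j • c j = z) :
    ∑ i, u i * ⟪a i, w⟫ = ⟪z, w⟫ := by
  simp [← hsum, inner_add_left, sum_inner, real_inner_smul_left, hw]

theorem norm_sum_smul_le_of_abs_le {ι E : Type*} [Fintype ι] [NormedAddCommGroup E]
    [NormedSpace ℝ E] (a : ι → E) {u : ι → ℝ} {M : ℝ} (hu : ∀ i, |u i| ≤ M) :
    ‖∑ i, u i • a i‖ ≤ M * ∑ i, ‖a i‖ := by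
  rw [Finset.mul_sum]
  refine norm_sum_le_of_le _ fun i _ ↦ ?_
  rw [norm_smul, Real.norm_eq_abs]
  exact mul_le_mul_of_nonneg_right (hu i) (norm_nonneg _)

/-- Core of "MFCQ implies bounded multipliers": if the equality-constraint normals `c` are
linearly independent and there is an MFCQ direction `w` for the active set `A`, then the
multiplier set `{(u, v) : u ≥ 0, uᵢ = 0 for i ∉ A, Σᵢ uᵢ aᵢ + Σⱼ vⱼ cⱼ = z}` is bounded. -/
theorem mfcq_implies_bounded_multipliers {n m l : ℕ}
    (a : Fin m → EuclideanSpace ℝ (Fin n))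
    (c : Fin l → EuclideanSpace ℝ (Fin n)) (hc : LinearIndependent ℝ c)
    (A : Set (Fin m)) (z : EuclideanSpace ℝ (Fin n))
    (w : EuclideanSpace ℝ (Fin n))
    (hw_eq : ∀ j, ⟪c j, w⟫ = 0)
    (hw_act : ∀ i ∈ A, ⟪a i, w⟫ < 0) :
    ∃ M : ℝ, ∀ (u : Fin m → ℝ) (v : Fin l → ℝ),
      (∀ i, 0 ≤ u i) → (∀ i ∉ A, u i = 0) →
      (∑ i, u i • a i + ∑ j, v j • c j = z) →
      (∀ i, u i ≤ M) ∧ (∀ j, |v j| ≤ M) := by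
  obtain ⟨Mu, hMu⟩ := exists_forall_le_of_sum_mul_eq (s := fun i ↦ -⟪a i, w⟫)
    (fun i hi ↦ neg_pos.2 (hw_act i hi)) (-⟪z, w⟫)
  obtain ⟨K, hK0, hK⟩ := hc.exists_norm_le_mul_norm_sum_smul
  refine ⟨max Mu (K * (‖z‖ + Mu * ∑ i, ‖a i‖)), fun u v hu huA hsum ↦ ?_⟩
  have hu_le : ∀ i, u i ≤ Mu := hMu u hu huA <| by
    simp [sum_mul_inner_eq_of_sum_smul_add_sum_smul_eq hw_eq hsum]
  refine ⟨fun i ↦ le_max_of_le_left (hu_le i), fun j ↦ le_max_of_le_right ?_⟩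
  calc |v j| ≤ ‖v‖ := by simpa using norm_le_pi_norm v j
    _ ≤ K * ‖∑ j, v j • c j‖ := hK v
    _ = K * ‖z - ∑ i, u i • a i‖ := by rw [← hsum, add_sub_cancel_left]
    _ ≤ K * (‖z‖ + Mu * ∑ i, ‖a i‖) := by
      gcongr
      refine (norm_sub_le _ _).trans (add_le_add_right ?_ _)
      exact norm_sum_smul_le_of_abs_le a fun i ↦ by rw [abs_of_nonneg (hu i)]; exact hu_le i
end

section
/- Let α > 0 and let f : ℝⁿ → ℝ, g : ℝⁿ → ℝᵐ, h : ℝⁿ → ℝˡ be differentiable with locally Lipschitz gradients. Let G : ℝⁿ → ℝⁿ be locally Lipschitz and suppose: (i) for every θ there exist u(θ) ∈ ℝᵐ and v(θ) ∈ ℝˡ such that (G(θ), u(θ), v(θ)) satisfies the QP-KKT conditions at θ, and on every compact set the multipliers are uniformly bounded; (ii) there is a unique point θ* ∈ ℝⁿ such that the NLP-KKT conditions hold at θ* with some multipliers, and θ* is the unique minimizer of f on the feasible set C = {θ : g(θ) ≤ 0, h(θ) = 0}; (iii) for every θ₀ ∈ ℝⁿ there exist ḡ ∈ ℝᵐ with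 ḡ ≥ 0 and h̄ ∈ ℝˡ with h̄ ≥ 0 such that θ₀ lies in the set C_{ḡ,h̄} = {θ : gᵢ(θ) ≤ ḡᵢ for all i, |hⱼ(θ)| ≤ h̄ⱼ for all j} and C_{ḡ,h̄} is compact. Then for every global solution θ : [0, ∞) → ℝⁿ of the ODE θ'(t) = G(θ(t)), one has θ(t) → θ* as t → ∞. (Theorem: global asymptotic stability of the safe gradient flow.) -/
open scoped RealInnerProductSpace BigOperators
open Set Filter

lemma antitoneOn_of_hasDerivAt_nonpos' {D : Set ℝ} (hD : Convex ℝ D) {f d : ℝ → ℝ}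
    (hf : ∀ x ∈ D, HasDerivAt f (d x) x) (hd : ∀ x ∈ interior D, d x ≤ 0) : AntitoneOn f D :=
  antitoneOn_of_hasDerivWithinAt_nonpos hD
    (fun x hx => (hf x hx).continuousAt.continuousWithinAt)
    (fun x hx => ((hf x (interior_subset hx)).hasDerivWithinAt))
    hd

lemma decay_aux {α : ℝ} {φ d : ℝ → ℝ}
    (hd : ∀ t, 0 ≤ t → HasDerivAt φ (d t) t)
    (hle : ∀ t, 0 ≤ t → d t ≤ -α * φ t) :
    ∀ t, 0 ≤ t → φ t ≤ φ 0 * Real.exp (-α * t) := by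
  intro t ht
  have key : AntitoneOn (fun s => φ s * Real.exp (α * s)) (Ici 0) := by
    apply antitoneOn_of_hasDerivAt_nonpos' (convex_Ici 0)
      (d := fun s => d s * Real.exp (α * s) + φ s * (α * Real.exp (α * s)))
    · intro x hx
      exact (hd x hx).mul (((Real.hasDerivAt_exp (α * x)).comp x
        ((hasDerivAt_id x).const_mul α)).congr_deriv (by ring))
    · intro x hx
      rw [interior_Ici] at hx
      have h1 := hle x (le_of_lt hx)
      have h2 : (0:ℝ) < Real.exp (α * x) := Real.exp_pos _
      nlinarith
  have h0 : φ t * Real.exp (α * t) ≤ φ 0 * Real.exp (α * 0) := by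
    simpa using key (self_mem_Ici) ht ht
  have h2 : (0:ℝ) < Real.exp (α * t) := Real.exp_pos _
  rw [mul_zero, Real.exp_zero, mul_one] at h0
  rw [neg_mul, Real.exp_neg, ← div_eq_mul_inv, le_div_iff₀ h2]
  exact h0

set_option maxHeartbeats 2000000 in
theorem safe_gradient_flow_GAS' {n m l : ℕ} (α : ℝ) (hα : 0 < α)
    (f : EuclideanSpace ℝ (Fin n) → ℝ)
    (g : Fin m → EuclideanSpace ℝ (Fin n) → ℝ)
    (h : Fin l → EuclideanSpace ℝ (Fin n) → ℝ)
    (hf : Differentiable ℝ f) (hg : ∀ i, Differentiable ℝ (g i))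
    (hh : ∀ j, Differentiable ℝ (h j))
    (G : EuclideanSpace ℝ (Fin n) → EuclideanSpace ℝ (Fin n))
    (hG : LocallyLipschitz G)
    (u : EuclideanSpace ℝ (Fin n) → Fin m → ℝ)
    (v : EuclideanSpace ℝ (Fin n) → Fin l → ℝ)
    (hGkkt : ∀ θ,
      (G θ + gradient f θ + ∑ i, u θ i • gradient (g i) θ + ∑ j, v θ j • gradient (h j) θ = 0 ∧
      (∀ i, ⟪gradient (g i) θ, G θ⟫ + α * g i θ ≤ 0) ∧
      (∀ j, ⟪gradient (h j) θ, G θ⟫ + α * h j θ = 0) ∧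
      (∀ i, 0 ≤ u θ i) ∧
      ∑ i, u θ i * (⟪gradient (g i) θ, G θ⟫ + α * g i θ) = 0))
    (hbound : ∀ K : Set (EuclideanSpace ℝ (Fin n)), IsCompact K →
      ∃ M : ℝ, ∀ θ ∈ K, (∀ i, u θ i ≤ M) ∧ (∀ j, |v θ j| ≤ M))
    (θstar : EuclideanSpace ℝ (Fin n))
    (hstar_uniq : ∀ θ : EuclideanSpace ℝ (Fin n),
      ((gradient f θ + ∑ i, u θ i • gradient (g i) θ + ∑ j, v θ j • gradient (h j) θ = 0) ∧
       (∀ i, g i θ ≤ 0) ∧ (∀ j, h j θ = 0) ∧ (∀ i, 0 ≤ u θ i) ∧ ∑ i, u θ i * g i θ = 0)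
      → θ = θstar)
    (hcompact : ∀ θ₀ : EuclideanSpace ℝ (Fin n),
      ∃ (gbar : Fin m → ℝ) (hbar : Fin l → ℝ), (∀ i, 0 ≤ gbar i) ∧ (∀ j, 0 ≤ hbar j) ∧
        θ₀ ∈ {θ | (∀ i, g i θ ≤ gbar i) ∧ (∀ j, |h j θ| ≤ hbar j)} ∧
        IsCompact {θ : EuclideanSpace ℝ (Fin n) |
          (∀ i, g i θ ≤ gbar i) ∧ (∀ j, |h j θ| ≤ hbar j)}) :
    ∀ θ : ℝ → EuclideanSpace ℝ (Fin n),
      (∀ t : ℝ, 0 ≤ t → HasDerivAt θ (G (θ t)) t) →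
      Filter.Tendsto θ Filter.atTop (nhds θstar) := by
  intro θ hθ
  obtain ⟨gbar, hbar, hgbar, hhbar, hθ0mem, hKcomp⟩ := hcompact (θ 0)
  set K : Set (EuclideanSpace ℝ (Fin n)) :=
    {x | (∀ i, g i x ≤ gbar i) ∧ (∀ j, |h j x| ≤ hbar j)} with hK
  -- chain rule
  have chain : ∀ (F : EuclideanSpace ℝ (Fin n) → ℝ), Differentiable ℝ F → ∀ t, 0 ≤ t →
      HasDerivAt (fun s => F (θ s)) ⟪gradient F (θ t), G (θ t)⟫ t := by
    intro F hF t ht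
    have h1 : HasFDerivAt F (InnerProductSpace.toDual ℝ _ (gradient F (θ t))) (θ t) :=
      (hF (θ t)).hasGradientAt.hasFDerivAt
    have h2 := h1.comp_hasDerivAt t (hθ t ht)
    rw [InnerProductSpace.toDual_apply_apply] at h2
    exact h2
  -- decay of g i along trajectory
  have gdecay : ∀ i, ∀ t, 0 ≤ t → g i (θ t) ≤ g i (θ 0) * Real.exp (-α * t) := by
    intro i
    apply decay_aux (d := fun s => ⟪gradient (g i) (θ s), G (θ s)⟫)
      (fun t ht => chain (g i) (hg i) t ht)
    intro t _
    have := (hGkkt (θ t)).2.1 i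
    linarith
  -- h j is exactly exponential
  have hexact : ∀ j, ∀ t, 0 ≤ t → h j (θ t) = h j (θ 0) * Real.exp (-α * t) := by
    intro j t ht
    have h1 : h j (θ t) ≤ h j (θ 0) * Real.exp (-α * t) := by
      apply decay_aux (d := fun s => ⟪gradient (h j) (θ s), G (θ s)⟫)
        (fun t ht => chain (h j) (hh j) t ht) _ t ht
      intro s _
      have := (hGkkt (θ s)).2.2.1 j
      linarith
    have h2 : -(h j (θ t)) ≤ -(h j (θ 0)) * Real.exp (-α * t) := by
      apply decay_aux (φ := fun s => -(h j (θ s)))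
        (d := fun s => -⟪gradient (h j) (θ s), G (θ s)⟫)
        (fun t ht => (chain (h j) (hh j) t ht).neg) _ t ht
      intro s _
      have := (hGkkt (θ s)).2.2.1 j
      linarith
    nlinarith
  have hdecay : ∀ j, ∀ t, 0 ≤ t → |h j (θ t)| ≤ |h j (θ 0)| * Real.exp (-α * t) := by
    intro j t ht
    rw [hexact j t ht, abs_mul, abs_of_pos (Real.exp_pos _)]
  -- trajectory stays in K
  have expt_le_one : ∀ t : ℝ, 0 ≤ t → Real.exp (-α * t) ≤ 1 := by
    intro t ht
    apply Real.exp_le_one_iff.mpr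
    nlinarith
  have traj_mem : ∀ t, 0 ≤ t → θ t ∈ K := by
    intro t ht
    constructor
    · intro i
      have h1 := gdecay i t ht
      have h2 := hθ0mem.1 i
      have h3 := hgbar i
      have h4 := Real.exp_pos (-α * t)
      have h5 := expt_le_one t ht
      nlinarith
    · intro j
      have h1 := hdecay j t ht
      have h2 := hθ0mem.2 j
      have h3 := hhbar j
      have h5 := expt_le_one t ht
      have h6 : (0:ℝ) ≤ |h j (θ 0)| := abs_nonneg _
      nlinarith
  -- multiplier bound on K
  obtain ⟨M0, hM0⟩ := hbound K hKcomp
  set M : ℝ := max M0 0 with hM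
  have hMnonneg : 0 ≤ M := le_max_right _ _
  have hMu : ∀ t, 0 ≤ t → ∀ i, u (θ t) i ≤ M := fun t ht i =>
    le_trans ((hM0 _ (traj_mem t ht)).1 i) (le_max_left _ _)
  have hMv : ∀ t, 0 ≤ t → ∀ j, |v (θ t) j| ≤ M := fun t ht j =>
    le_trans ((hM0 _ (traj_mem t ht)).2 j) (le_max_left _ _)
  -- bound on G over K
  obtain ⟨B0, hB0⟩ := hKcomp.exists_bound_of_continuousOn hG.continuous.continuousOn
  set B : ℝ := max B0 1 with hB
  have hBpos : (0:ℝ) < B := lt_of_lt_of_le one_pos (le_max_right _ _)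
  have hGB : ∀ t, 0 ≤ t → ‖G (θ t)‖ ≤ B := fun t ht =>
    le_trans (hB0 _ (traj_mem t ht)) (le_max_left _ _)
  -- trajectory is Lipschitz
  have traj_lip : ∀ s t : ℝ, 0 ≤ s → s ≤ t → ‖θ t - θ s‖ ≤ B * (t - s) := by
    intro s t hs hst
    exact norm_image_sub_le_of_norm_deriv_le_segment'
      (f := θ) (f' := fun x => G (θ x)) (a := s) (b := t)
      (fun x hx => (hθ x (le_trans hs hx.1)).hasDerivWithinAt)
      (fun x hx => hGB x (le_trans hs hx.1)) t (right_mem_Icc.mpr hst)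
  -- the key inner-product identity
  have inner_id : ∀ x : EuclideanSpace ℝ (Fin n),
      ⟪gradient f x, G x⟫ = -‖G x‖^2 + α * (∑ i, u x i * g i x)
        + α * (∑ j, v x j * h j x) := by
    intro x
    obtain ⟨ha, hb, hc, hd, he⟩ := hGkkt x
    have h0 : ⟪G x + gradient f x + ∑ i, u x i • gradient (g i) x
        + ∑ j, v x j • gradient (h j) x, G x⟫ = 0 := by rw [ha, inner_zero_left]
    rw [inner_add_left, inner_add_left, inner_add_left, sum_inner, sum_inner,
      real_inner_self_eq_norm_sq] at h0
    simp only [real_inner_smul_left] at h0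
    have hgs : ∑ i, u x i * ⟪gradient (g i) x, G x⟫ = -α * ∑ i, u x i * g i x := by
      have h1 : ∑ i, (u x i * ⟪gradient (g i) x, G x⟫ + α * (u x i * g i x)) = 0 := by
        rw [← he]; apply Finset.sum_congr rfl; intro i _; ring
      rw [Finset.sum_add_distrib, ← Finset.mul_sum] at h1
      linarith
    have hhs : ∑ j, v x j * ⟪gradient (h j) x, G x⟫ = -α * ∑ j, v x j * h j x := by
      have hterm : ∀ j, v x j * ⟪gradient (h j) x, G x⟫ = -α * (v x j * h j x) := by
        intro j
        have h7 : ⟪gradient (h j) x, G x⟫ = -(α * h j x) := by linarith [hc j]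
        rw [h7]; ring
      rw [Finset.sum_congr rfl (fun j _ => hterm j), ← Finset.mul_sum]
    rw [hgs, hhs] at h0
    linarith
  -- constant C
  set C : ℝ := α * M * ((∑ i, max (g i (θ 0)) 0) + ∑ j, |h j (θ 0)|) with hC
  have hCnonneg : 0 ≤ C := by
    apply mul_nonneg (mul_nonneg (le_of_lt hα) hMnonneg)
    apply add_nonneg (Finset.sum_nonneg (fun i _ => le_max_right _ _))
      (Finset.sum_nonneg (fun j _ => abs_nonneg _))
  -- derivative bound for f along trajectory
  have fbound : ∀ t, 0 ≤ t →
      ⟪gradient f (θ t), G (θ t)⟫ ≤ -‖G (θ t)‖^2 + C * Real.exp (-α * t) := by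
    intro t ht
    rw [inner_id (θ t)]
    have hexp := Real.exp_pos (-α * t)
    have hsum1 : ∑ i, u (θ t) i * g i (θ t)
        ≤ (∑ i, max (g i (θ 0)) 0) * (M * Real.exp (-α * t)) := by
      rw [Finset.sum_mul]
      apply Finset.sum_le_sum
      intro i _
      have h1 : g i (θ t) ≤ max (g i (θ 0)) 0 * Real.exp (-α * t) := by
        have := gdecay i t ht
        nlinarith [le_max_left (g i (θ 0)) (0:ℝ)]
      have h2 : (0:ℝ) ≤ max (g i (θ 0)) 0 * Real.exp (-α * t) :=
        mul_nonneg (le_max_right _ _) (le_of_lt hexp)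
      have h3 := (hGkkt (θ t)).2.2.2.1 i
      have h4 := hMu t ht i
      nlinarith
    have hsum2 : ∑ j, v (θ t) j * h j (θ t)
        ≤ (∑ j, |h j (θ 0)|) * (M * Real.exp (-α * t)) := by
      rw [Finset.sum_mul]
      apply Finset.sum_le_sum
      intro j _
      have h1 : v (θ t) j * h j (θ t) ≤ |v (θ t) j| * |h j (θ t)| := by
        calc v (θ t) j * h j (θ t) ≤ |v (θ t) j * h j (θ t)| := le_abs_self _
        _ = |v (θ t) j| * |h j (θ t)| := abs_mul _ _
      have h2 := hdecay j t ht
      have h3 := hMv t ht j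
      have h4 : (0:ℝ) ≤ |v (θ t) j| := abs_nonneg _
      have h5 : (0:ℝ) ≤ |h j (θ t)| := abs_nonneg _
      have h6 : (0:ℝ) ≤ |h j (θ 0)| := abs_nonneg _
      nlinarith
    rw [hC]
    nlinarith
  -- energy function
  set E : ℝ → ℝ := fun t => f (θ t) + (C/α) * Real.exp (-α * t) with hEdef
  have hEderiv : ∀ t, 0 ≤ t →
      HasDerivAt E (⟪gradient f (θ t), G (θ t)⟫ - C * Real.exp (-α * t)) t := by
    intro t ht
    have h1 := chain f hf t ht
    have h2a : HasDerivAt (fun s : ℝ => -α * s) (-α) t := by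
      simpa using (hasDerivAt_id t).const_mul (-α)
    have h2 : HasDerivAt (fun s => (C/α) * Real.exp (-α * s))
        ((C/α) * (Real.exp (-α * t) * -α)) t :=
      ((Real.hasDerivAt_exp (-α * t)).comp t h2a).const_mul (C/α)
    exact (h1.add h2).congr_deriv (by field_simp; ring)
  have hEanti : AntitoneOn E (Ici 0) := by
    apply antitoneOn_of_hasDerivAt_nonpos' (convex_Ici 0)
      (d := fun t => ⟪gradient f (θ t), G (θ t)⟫ - C * Real.exp (-α * t))
      (fun t ht => hEderiv t ht)
    intro t ht
    rw [interior_Ici] at ht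
    have h1 := fbound t (le_of_lt ht)
    nlinarith [norm_nonneg (G (θ t))]
  -- lower bound for E
  obtain ⟨xmin, hxminK, hxmin⟩ := hKcomp.exists_isMinOn ⟨θ 0, hθ0mem⟩
    hf.continuous.continuousOn
  have hElb : ∀ t, 0 ≤ t → f xmin ≤ E t := by
    intro t ht
    have h1 : f xmin ≤ f (θ t) := hxmin (traj_mem t ht)
    have h2 : (0:ℝ) ≤ (C/α) * Real.exp (-α * t) :=
      mul_nonneg (div_nonneg hCnonneg (le_of_lt hα)) (le_of_lt (Real.exp_pos _))
    rw [hEdef]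
    dsimp only
    linarith
  -- G along the trajectory tends to 0
  have hGtend : Tendsto (fun t => G (θ t)) atTop (nhds 0) := by
    by_contra hnot
    rw [Metric.tendsto_atTop] at hnot
    push_neg at hnot
    obtain ⟨ε, hε, hfreq⟩ := hnot
    obtain ⟨δ0, hδ0, hδ0'⟩ := Metric.uniformContinuousOn_iff.mp
      (hKcomp.uniformContinuousOn_of_continuous hG.continuous.continuousOn) (ε/2) (by linarith)
    set δ : ℝ := δ0 / (2 * B) with hδ
    have hδpos : 0 < δ := by positivity
    set ρ : ℝ := δ * (ε/2)^2 with hρ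
    have hρpos : 0 < ρ := by positivity
    have drop : ∀ t, 0 ≤ t → ε ≤ ‖G (θ t)‖ → E (t + δ) ≤ E t - ρ := by
      intro t ht hGt
      have hnear : ∀ x ∈ Icc t (t + δ), (ε/2) ≤ ‖G (θ x)‖ := by
        intro x hx
        have hx0 : 0 ≤ x := le_trans ht hx.1
        have hdxt : dist (θ x) (θ t) < δ0 := by
          rw [dist_eq_norm]
          have h1 : ‖θ x - θ t‖ ≤ B * (x - t) := traj_lip t x ht hx.1
          have h2 : B * (x - t) ≤ B * δ := by nlinarith [hx.2]
          have h3 : B * δ = δ0 / 2 := by rw [hδ]; field_simp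
          linarith
        have h4 := hδ0' (θ x) (traj_mem x hx0) (θ t) (traj_mem t ht) hdxt
        rw [dist_eq_norm] at h4
        have h5 : ‖G (θ t)‖ - ‖G (θ x)‖ ≤ ‖G (θ x) - G (θ t)‖ := by
          rw [norm_sub_rev]
          exact le_trans (le_abs_self _) (abs_norm_sub_norm_le _ _)
        linarith
      have keyF : AntitoneOn (fun x => E x + (ε/2)^2 * x) (Icc t (t + δ)) := by
        apply antitoneOn_of_hasDerivAt_nonpos' (convex_Icc _ _)
          (d := fun x => (⟪gradient f (θ x), G (θ x)⟫ - C * Real.exp (-α * x)) + (ε/2)^2 * 1)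
        · intro x hx
          exact (hEderiv x (le_trans ht hx.1)).add ((hasDerivAt_id x).const_mul ((ε/2)^2))
        · intro x hx
          rw [interior_Icc] at hx
          have hx0 : 0 ≤ x := le_trans ht (le_of_lt hx.1)
          have h1 := fbound x hx0
          have h2 := hnear x ⟨le_of_lt hx.1, le_of_lt hx.2⟩
          nlinarith
      have h6 := keyF (left_mem_Icc.mpr (by linarith)) (right_mem_Icc.mpr (by linarith))
        (by linarith)
      dsimp only at h6
      rw [hρ]
      nlinarith
    have step : ∀ s, 0 ≤ s → ∃ t, s ≤ t ∧ E (t + δ) ≤ E s - ρ := by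
      intro s hs
      obtain ⟨t, hts, hdist⟩ := hfreq s
      refine ⟨t, hts, ?_⟩
      have hGt : ε ≤ ‖G (θ t)‖ := by rwa [dist_zero_right] at hdist
      have h7 := drop t (le_trans hs hts) hGt
      have h8 : E t ≤ E s := hEanti (mem_Ici.mpr hs) (mem_Ici.mpr (le_trans hs hts)) hts
      linarith
    have iter : ∀ k : ℕ, ∃ s, 0 ≤ s ∧ E s ≤ E 0 - k * ρ := by
      intro k
      induction k with
      | zero => exact ⟨0, le_refl 0, by simp⟩
      | succ k ih =>
        obtain ⟨s, hs, hEs⟩ := ih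
        obtain ⟨t, hst, hEt⟩ := step s hs
        refine ⟨t + δ, by linarith, ?_⟩
        push_cast
        linarith
    obtain ⟨k, hk⟩ := exists_nat_gt ((E 0 - f xmin) / ρ)
    obtain ⟨s, hs, hEs⟩ := iter k
    have h9 := hElb s hs
    rw [div_lt_iff₀ hρpos] at hk
    nlinarith
  -- conclusion
  by_contra hnot
  rw [Metric.tendsto_atTop] at hnot
  push_neg at hnot
  obtain ⟨ε, hε, hfreq⟩ := hnot
  have hts : ∀ k : ℕ, ∃ t : ℝ, (k:ℝ) ≤ t ∧ ε ≤ dist (θ t) θstar := fun k => hfreq k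
  choose ts hts1 hts2 using hts
  have hts0 : ∀ k, 0 ≤ ts k := fun k => le_trans (Nat.cast_nonneg k) (hts1 k)
  have htstop : Tendsto ts atTop atTop :=
    tendsto_atTop_mono hts1 tendsto_natCast_atTop_atTop
  obtain ⟨θbar, hθbarK, φ, hφ, hconv⟩ :=
    hKcomp.tendsto_subseq (fun k => traj_mem (ts k) (hts0 k))
  have hsubtop : Tendsto (fun k => ts (φ k)) atTop atTop := htstop.comp hφ.tendsto_atTop
  have hG0 : G θbar = 0 := by
    have h1 : Tendsto (fun k => G (θ (ts (φ k)))) atTop (nhds (G θbar)) :=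
      (hG.continuous.tendsto θbar).comp hconv
    have h2 : Tendsto (fun k => G (θ (ts (φ k)))) atTop (nhds 0) := hGtend.comp hsubtop
    exact tendsto_nhds_unique h1 h2
  have hexp0 : Tendsto (fun k => Real.exp (-α * ts (φ k))) atTop (nhds 0) := by
    apply Real.tendsto_exp_atBot.comp
    exact Tendsto.const_mul_atTop_of_neg (by linarith : -α < 0) hsubtop
  have hgbar0 : ∀ i, g i θbar ≤ 0 := by
    intro i
    have hta : Tendsto (fun k => g i (θ (ts (φ k)))) atTop (nhds (g i θbar)) :=
      ((hg i).continuous.tendsto θbar).comp hconv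
    have htb : Tendsto (fun k => g i (θ 0) * Real.exp (-α * ts (φ k))) atTop (nhds 0) := by
      have h3 := hexp0.const_mul (g i (θ 0))
      rwa [mul_zero] at h3
    exact le_of_tendsto_of_tendsto' hta htb (fun k => gdecay i (ts (φ k)) (hts0 (φ k)))
  have hhbar0 : ∀ j, h j θbar = 0 := by
    intro j
    have hta : Tendsto (fun k => h j (θ (ts (φ k)))) atTop (nhds (h j θbar)) :=
      ((hh j).continuous.tendsto θbar).comp hconv
    have htb : Tendsto (fun k => h j (θ (ts (φ k)))) atTop (nhds 0) := by
      have heq : (fun k => h j (θ (ts (φ k))))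
          = fun k => h j (θ 0) * Real.exp (-α * ts (φ k)) :=
        funext fun k => hexact j (ts (φ k)) (hts0 (φ k))
      rw [heq]
      have h3 := hexp0.const_mul (h j (θ 0))
      rwa [mul_zero] at h3
    exact tendsto_nhds_unique hta htb
  have hdisteps : ε ≤ dist θbar θstar := by
    have hta : Tendsto (fun k => dist (θ (ts (φ k))) θstar) atTop (nhds (dist θbar θstar)) :=
      (hconv.dist tendsto_const_nhds)
    exact ge_of_tendsto hta (Eventually.of_forall (fun k => hts2 (φ k)))
  obtain ⟨ha, hb, hc, hd, he⟩ := hGkkt θbar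
  rw [hG0] at ha he
  rw [zero_add] at ha
  have hsum0 : ∑ i, u θbar i * g i θbar = 0 := by
    have h1 : ∑ i, u θbar i * (⟪gradient (g i) θbar, (0:EuclideanSpace ℝ (Fin n))⟫
        + α * g i θbar) = α * ∑ i, u θbar i * g i θbar := by
      rw [Finset.mul_sum]
      apply Finset.sum_congr rfl
      intro i _
      rw [inner_zero_right]
      ring
    rw [h1] at he
    exact (mul_eq_zero.mp he).resolve_left (ne_of_gt hα)
  have hfinal : θbar = θstar := hstar_uniq θbar ⟨ha, hgbar0, hhbar0, hd, hsum0⟩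
  rw [hfinal, dist_self] at hdisteps
  linarith



/-- Global asymptotic stability of the safe gradient flow: under (i) QP-KKT solvability along
`G` with compactly-uniformly-bounded multipliers, (ii) uniqueness of the NLP-KKT point `θ*`,
which is the unique minimizer of `f` on the feasible set, and (iii) every point being
contained in a compact set `C_{ḡ,h̄}`, every global solution of `θ' = G(θ)` converges
to `θ*`. -/
theorem safe_gradient_flow_GAS {n m l : ℕ} (α : ℝ) (hα : 0 < α)
    (f : EuclideanSpace ℝ (Fin n) → ℝ)
    (g : Fin m → EuclideanSpace ℝ (Fin n) → ℝ)
    (h : Fin l → EuclideanSpace ℝ (Fin n) → ℝ)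
    (hf : Differentiable ℝ f) (hg : ∀ i, Differentiable ℝ (g i))
    (hh : ∀ j, Differentiable ℝ (h j))
    (hf' : LocallyLipschitz (fun θ => gradient f θ))
    (hg' : ∀ i, LocallyLipschitz (fun θ => gradient (g i) θ))
    (hh' : ∀ j, LocallyLipschitz (fun θ => gradient (h j) θ))
    (G : EuclideanSpace ℝ (Fin n) → EuclideanSpace ℝ (Fin n))
    (hG : LocallyLipschitz G)
    -- (i) QP-KKT conditions hold along G, with multipliers uniformly bounded on compacts
    (u : EuclideanSpace ℝ (Fin n) → Fin m → ℝ)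
    (v : EuclideanSpace ℝ (Fin n) → Fin l → ℝ)
    (hGkkt : ∀ θ, QPKKT α f g h θ (G θ) (u θ) (v θ))
    (hbound : ∀ K : Set (EuclideanSpace ℝ (Fin n)), IsCompact K →
      ∃ M : ℝ, ∀ θ ∈ K, (∀ i, u θ i ≤ M) ∧ (∀ j, |v θ j| ≤ M))
    -- (ii) a unique NLP-KKT point θ*, the unique minimizer of f on the feasible set
    (θstar : EuclideanSpace ℝ (Fin n))
    (hstar_kkt : ∃ ustar vstar, NLPKKT f g h θstar ustar vstar)
    (hstar_uniq : ∀ θ, (∃ u' v', NLPKKT f g h θ u' v') → θ = θstar)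
    (hstar_feas : (∀ i, g i θstar ≤ 0) ∧ (∀ j, h j θstar = 0))
    (hstar_min : ∀ θ, (∀ i, g i θ ≤ 0) → (∀ j, h j θ = 0) → θ ≠ θstar →
      f θstar < f θ)
    -- (iii) every point lies in a compact set C_{ḡ,h̄}
    (hcompact : ∀ θ₀ : EuclideanSpace ℝ (Fin n),
      ∃ (gbar : Fin m → ℝ) (hbar : Fin l → ℝ), (∀ i, 0 ≤ gbar i) ∧ (∀ j, 0 ≤ hbar j) ∧
        θ₀ ∈ {θ | (∀ i, g i θ ≤ gbar i) ∧ (∀ j, |h j θ| ≤ hbar j)} ∧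
        IsCompact {θ : EuclideanSpace ℝ (Fin n) |
          (∀ i, g i θ ≤ gbar i) ∧ (∀ j, |h j θ| ≤ hbar j)}) :
    ∀ θ : ℝ → EuclideanSpace ℝ (Fin n),
      (∀ t : ℝ, 0 ≤ t → HasDerivAt θ (G (θ t)) t) →
      Filter.Tendsto θ Filter.atTop (nhds θstar) := by
  intro θ hθ
  refine safe_gradient_flow_GAS' α hα f g h hf hg hh G hG u v
    (fun x => hGkkt x) hbound θstar
    (fun x hyp => hstar_uniq x ⟨u x, v x, hyp⟩) hcompact θ hθ
end
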